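/- Let Π ∈ S ⊂ ℝ^{m×T} with rank(Π) ≤ K+1, S convex, and let P, M be the projections onto the orthogonal complement and low-rank space of Π respectively (as defined via the SVD of Π). Let Π̂ minimize Γ ↦ (1/2)Σ_{i,t}(y_{it} − tr(X_{it}ᵀΓ))² + λ‖Γ‖₊ over Γ ∈ S. Assume: (a) for all Δ ∈ S ⊖ S, Σ_{i,t}|tr(X_{it}ᵀΔ)|² = Q(Δ) + L(Δ) with Q(Δ) ≥ κ‖Δ‖_F² whenever ‖P(Δ)‖₊ ≤ 3‖M(Δ)‖₊, and |L(Δ)| ≤ r‖Δ‖₊; (b) |Σ_{i,t} tr(ε_{it}X_{it}ᵀΔ)| ≤ (r/2)‖Δ‖₊ for all Δ ∈ S ⊖ S, where ε_{it} = y_{it} − tr(X_{it}ᵀΠ); and (c) λ ≥ 2r. Then the error Δ̂ = Π̂ − Π satisfies ‖P(Δ̂)‖₊ ≤ 3‖M(Δ̂)‖₊ and ‖Π̂ − Π‖_F ≤ 3√(2(K+1)) λ / κ. -/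

import Mathlib

open Matrix BigOperators

noncomputable def frobNorm {m n : Type*} [Fintype m] [Fintype n] (A : Matrix m n ℝ) : ℝ :=
  Real.sqrt (∑ i, ∑ j, (A i j) ^ 2)

noncomputable def nuclearNorm {m n : Type*} [Fintype m] [Fintype n] [DecidableEq n]
    (A : Matrix m n ℝ) : ℝ :=
  ∑ j, Real.sqrt ((Matrix.isHermitian_conjTranspose_mul_self A).eigenvalues j)

noncomputable def opNorm {m n : Type*} [Fintype m] [Fintype n] [DecidableEq n]
    (A : Matrix m n ℝ) : ℝ :=
  ‖LinearMap.toContinuousLinearMap (Matrix.toEuclideanLin A)‖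

/-!
Comparing the objective at `Π̂` and at `Π` gives the basic inequality
`½ Σ ⟨X, Δ⟩² ≤ Σ ε ⟨X, Δ⟩ + λ (‖Π‖₊ - ‖Π̂‖₊)` for `Δ = Π̂ - Π`. The nuclear norm is decomposable
along the SVD of `Π`: `‖Π + P Δ‖₊ = ‖Π‖₊ + ‖P Δ‖₊`, because `Π` and `P Δ` have orthogonal row and
column spaces; hence `‖Π‖₊ - ‖Π̂‖₊ ≤ ‖M Δ‖₊ - ‖P Δ‖₊`. Together with the noise bound (b) and
`λ ≥ 2r` this forces the cone condition, after which (a) yields `κ ‖Δ‖_F² ≤ 3λ ‖M Δ‖₊`. Finally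
`M Δ` has rank at most `2 (K + 1)` and `‖M Δ‖_F ≤ ‖Δ‖_F`, so `‖M Δ‖₊ ≤ √(2 (K + 1)) ‖Δ‖_F`.

The nuclear-norm inequalities come from duality: `tr (Wᵀ A) ≤ ‖A‖₊` for every partial isometry
`W` (Cauchy–Schwarz in an eigenbasis of `Aᵀ A`), with equality for `W = A (Aᵀ A)^{-1/2}`, the
inverse taken on the row space of `A`.
-/

section NuclearNorm

variable {m n : Type*} [Fintype m]

lemma sum_sq_apply_eq_transpose_mul_self_apply (B : Matrix m n ℝ) (j : n) :
    ∑ i, B i j ^ 2 = (Bᵀ * B) j j := by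
  simp [mul_apply, sq]

variable [Fintype n]

lemma trace_transpose_mul_eq_sum (B C : Matrix m n ℝ) :
    trace (Bᵀ * C) = ∑ j, ∑ i, B i j * C i j := by
  simp [trace, mul_apply]

lemma frobNorm_nonneg (A : Matrix m n ℝ) : 0 ≤ frobNorm A := Real.sqrt_nonneg _

lemma frobNorm_sq (A : Matrix m n ℝ) : frobNorm A ^ 2 = trace (Aᵀ * A) := by
  rw [frobNorm, Real.sq_sqrt (by positivity), trace_transpose_mul_eq_sum, Finset.sum_comm]
  simp [sq]

lemma frobNorm_le_frobNorm_add_of_trace_eq_zero {A B : Matrix m n ℝ} (h : trace (Aᵀ * B) = 0) :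
    frobNorm B ≤ frobNorm (A + B) := by
  have h' : trace (Bᵀ * A) = 0 := by rwa [← trace_transpose, transpose_mul, transpose_transpose]
  rw [← sq_le_sq₀ (frobNorm_nonneg _) (frobNorm_nonneg _), frobNorm_sq, frobNorm_sq,
    transpose_add, Matrix.add_mul, Matrix.mul_add, Matrix.mul_add, trace_add, trace_add,
    trace_add, h, h']
  linarith [frobNorm_sq A ▸ sq_nonneg (frobNorm A)]

variable [DecidableEq n]

lemma orthogonal_conj_diagonal_mul {U : Matrix n n ℝ} (hU : Uᵀ * U = 1) (a b : n → ℝ) :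
    U * diagonal a * Uᵀ * (U * diagonal b * Uᵀ) = U * diagonal (a * b) * Uᵀ := by
  rw [show a * b = fun j => a j * b j from rfl, ← diagonal_mul_diagonal]
  simp only [Matrix.mul_assoc]
  rw [← Matrix.mul_assoc Uᵀ U, hU, Matrix.one_mul]

lemma trace_orthogonal_conj_diagonal {U : Matrix n n ℝ} (hU : Uᵀ * U = 1) (a : n → ℝ) :
    trace (U * diagonal a * Uᵀ) = ∑ j, a j := by
  rw [trace_mul_comm, ← mul_assoc, hU, one_mul, trace_diagonal]

noncomputable def sqSingularValue (A : Matrix m n ℝ) : n → ℝ :=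
  (isHermitian_conjTranspose_mul_self A).eigenvalues

lemma nuclearNorm_eq_sum_sqrt_sqSingularValue (A : Matrix m n ℝ) :
    nuclearNorm A = ∑ j, √(sqSingularValue A j) := rfl

lemma sqSingularValue_nonneg (A : Matrix m n ℝ) (j : n) : 0 ≤ sqSingularValue A j :=
  (posSemidef_conjTranspose_mul_self A).eigenvalues_nonneg j

lemma exists_orthogonal_diagonalization_transpose_mul_self (A : Matrix m n ℝ) :
    ∃ U : Matrix n n ℝ, Uᵀ * U = 1 ∧ U * Uᵀ = 1 ∧
      Aᵀ * A = U * diagonal (sqSingularValue A) * Uᵀ := by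
  set hA := isHermitian_conjTranspose_mul_self A
  have hstar : star (hA.eigenvectorUnitary : Matrix n n ℝ) =
      (hA.eigenvectorUnitary : Matrix n n ℝ)ᵀ := conjTranspose_eq_transpose_of_trivial _
  refine ⟨hA.eigenvectorUnitary, ?_, ?_, ?_⟩
  · rw [← hstar]; exact Unitary.star_mul_self_of_mem hA.eigenvectorUnitary.2
  · rw [← hstar]; exact Unitary.mul_star_self_of_mem hA.eigenvectorUnitary.2
  · have h := hA.spectral_theorem
    rw [Unitary.conjStarAlgAut_apply, hstar] at h
    rw [← conjTranspose_eq_transpose_of_trivial A]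
    simpa [sqSingularValue] using h

lemma nuclearNorm_nonneg (A : Matrix m n ℝ) : 0 ≤ nuclearNorm A :=
  Finset.sum_nonneg fun _ _ => Real.sqrt_nonneg _

lemma nuclearNorm_neg (A : Matrix m n ℝ) : nuclearNorm (-A) = nuclearNorm A := by
  unfold nuclearNorm
  congr 2
  simp

lemma posSemidef_one_sub_of_isIdempotentElem {W : Matrix m n ℝ}
    (hW : IsIdempotentElem (Wᵀ * W)) : (1 - Wᵀ * W).PosSemidef := by
  have h : 1 - Wᵀ * W = (1 - Wᵀ * W)ᴴ * (1 - Wᵀ * W) := by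
    rw [conjTranspose_eq_transpose_of_trivial, transpose_sub, transpose_one, transpose_mul,
      transpose_transpose, hW.one_sub.eq]
  rw [h]
  exact posSemidef_conjTranspose_mul_self _

lemma trace_transpose_mul_le_nuclearNorm (A : Matrix m n ℝ) {W : Matrix m n ℝ}
    (hW : IsIdempotentElem (Wᵀ * W)) : trace (Wᵀ * A) ≤ nuclearNorm A := by
  obtain ⟨U, hUU, hUU', hgram⟩ := exists_orthogonal_diagonalization_transpose_mul_self A
  have hcol_A : ∀ j, ∑ i, (A * U) i j ^ 2 = sqSingularValue A j := fun j => by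
    rw [sum_sq_apply_eq_transpose_mul_self_apply, transpose_mul, Matrix.mul_assoc,
      ← Matrix.mul_assoc Aᵀ, hgram]
    simp only [Matrix.mul_assoc]
    rw [← Matrix.mul_assoc Uᵀ U, hUU, Matrix.one_mul, Matrix.mul_one, diagonal_apply_eq]
  have hcol_W : ∀ j, ∑ i, (W * U) i j ^ 2 ≤ 1 := fun j => by
    have := ((posSemidef_one_sub_of_isIdempotentElem hW).conjTranspose_mul_mul_same U).diag_nonneg
      (i := j)
    rw [sum_sq_apply_eq_transpose_mul_self_apply]
    simpa [conjTranspose_eq_transpose_of_trivial, Matrix.mul_sub, Matrix.sub_mul, hUU,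
      Matrix.mul_assoc] using this
  calc trace (Wᵀ * A) = trace ((W * U)ᵀ * (A * U)) := by
        rw [transpose_mul, Matrix.mul_assoc, trace_mul_comm Uᵀ, Matrix.mul_assoc,
          Matrix.mul_assoc, hUU', Matrix.mul_one]
    _ = ∑ j, ∑ i, (W * U) i j * (A * U) i j := trace_transpose_mul_eq_sum _ _
    _ ≤ ∑ j, √(∑ i, (W * U) i j ^ 2) * √(∑ i, (A * U) i j ^ 2) :=
        Finset.sum_le_sum fun j _ => Real.sum_mul_le_sqrt_mul_sqrt _ _ _
    _ ≤ nuclearNorm A := Finset.sum_le_sum fun j _ => by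
        rw [hcol_A]
        exact mul_le_of_le_one_left (Real.sqrt_nonneg _) (Real.sqrt_le_one.mpr (hcol_W j))

lemma exists_partialIsometry_trace_eq_nuclearNorm (A : Matrix m n ℝ) :
    ∃ W : Matrix m n ℝ, trace (Wᵀ * A) = nuclearNorm A ∧ IsIdempotentElem (Wᵀ * W) ∧
      (∃ C : Matrix n n ℝ, W = A * C) ∧ ∃ E : Matrix m n ℝ, Wᵀ * W = Aᵀ * E := by
  obtain ⟨U, hUU, -, hgram⟩ := exists_orthogonal_diagonalization_transpose_mul_self A
  set s : n → ℝ := fun j => √(sqSingularValue A j)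
  have hs : sqSingularValue A = s * s :=
    funext fun j => (Real.mul_self_sqrt (sqSingularValue_nonneg A j)).symm
  set D : (n → ℝ) → Matrix n n ℝ := fun a => U * diagonal a * Uᵀ
  have hD : ∀ a b, D a * D b = D (a * b) := orthogonal_conj_diagonal_mul hUU
  have hDt : ∀ a, (D a)ᵀ = D a := fun a => by
    simp only [D, transpose_mul, transpose_transpose, diagonal_transpose, Matrix.mul_assoc]
  have hAA : Aᵀ * A = D (s * s) := hs ▸ hgram
  -- `s⁻¹` inverts the nonzero singular values and is `0` where `s` is; `s * s⁻¹` is a 0/1 vector.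
  have hWW : (A * D s⁻¹)ᵀ * (A * D s⁻¹) = D (s * s⁻¹) := by
    rw [transpose_mul, hDt, Matrix.mul_assoc, ← Matrix.mul_assoc Aᵀ, hAA, hD, hD]
    congr 1
    funext j
    simp only [Pi.mul_apply, Pi.inv_apply]
    rcases eq_or_ne (s j) 0 with h | h <;> field_simp
  refine ⟨A * D s⁻¹, ?_, ?_, ⟨_, rfl⟩, A * D (s⁻¹ * s⁻¹), ?_⟩
  · rw [transpose_mul, hDt, Matrix.mul_assoc, hAA, hD, trace_orthogonal_conj_diagonal hUU,
      nuclearNorm_eq_sum_sqrt_sqSingularValue]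
    refine Finset.sum_congr rfl fun j _ => ?_
    change (s j)⁻¹ * (s j * s j) = s j
    rcases eq_or_ne (s j) 0 with h | h <;> field_simp
  · rw [IsIdempotentElem, hWW, hD]
    congr 1
    funext j
    simp only [Pi.mul_apply, Pi.inv_apply]
    rcases eq_or_ne (s j) 0 with h | h <;> field_simp
  · rw [hWW, ← Matrix.mul_assoc, hAA, hD]
    congr 1
    funext j
    simp only [Pi.mul_apply, Pi.inv_apply]
    rcases eq_or_ne (s j) 0 with h | h <;> field_simp

lemma nuclearNorm_add_le (A B : Matrix m n ℝ) :
    nuclearNorm (A + B) ≤ nuclearNorm A + nuclearNorm B := by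
  obtain ⟨W, htr, hW, -⟩ := exists_partialIsometry_trace_eq_nuclearNorm (A + B)
  rw [← htr, Matrix.mul_add, trace_add]
  exact add_le_add (trace_transpose_mul_le_nuclearNorm A hW)
    (trace_transpose_mul_le_nuclearNorm B hW)

lemma nuclearNorm_add_nuclearNorm_le_of_orthogonal {A B : Matrix m n ℝ} (hAB : Aᵀ * B = 0)
    (hAB' : A * Bᵀ = 0) : nuclearNorm A + nuclearNorm B ≤ nuclearNorm (A + B) := by
  obtain ⟨_, htrA, hidA, ⟨CA, rfl⟩, EA, hEA⟩ := exists_partialIsometry_trace_eq_nuclearNorm A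
  obtain ⟨_, htrB, hidB, ⟨CB, rfl⟩, EB, hEB⟩ := exists_partialIsometry_trace_eq_nuclearNorm B
  have hBA : Bᵀ * A = 0 := by simpa using congrArg transpose hAB
  have hAW : (A * CA)ᵀ * B = 0 := by rw [transpose_mul, Matrix.mul_assoc, hAB, Matrix.mul_zero]
  have hBW : (B * CB)ᵀ * A = 0 := by rw [transpose_mul, Matrix.mul_assoc, hBA, Matrix.mul_zero]
  have hWW : (A * CA)ᵀ * (B * CB) = 0 := by rw [← Matrix.mul_assoc, hAW, Matrix.zero_mul]
  have hWW' : (B * CB)ᵀ * (A * CA) = 0 := by rw [← Matrix.mul_assoc, hBW, Matrix.zero_mul]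
  have hPP : (A * CA)ᵀ * (A * CA) * ((B * CB)ᵀ * (B * CB)) = 0 := by
    have hEA' : (A * CA)ᵀ * (A * CA) = EAᵀ * A := by
      simpa [transpose_mul] using congrArg transpose hEA
    rw [hEA', hEB, Matrix.mul_assoc, ← Matrix.mul_assoc A, hAB', Matrix.zero_mul,
      Matrix.mul_zero]
  have hPP' : (B * CB)ᵀ * (B * CB) * ((A * CA)ᵀ * (A * CA)) = 0 := by
    simpa [transpose_mul, Matrix.mul_assoc] using congrArg transpose hPP
  have hid : IsIdempotentElem ((A * CA + B * CB)ᵀ * (A * CA + B * CB)) := by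
    rw [transpose_add, Matrix.add_mul, Matrix.mul_add, Matrix.mul_add, hWW, hWW', add_zero,
      zero_add]
    simp only [IsIdempotentElem, Matrix.add_mul, Matrix.mul_add, hidA.eq, hidB.eq,
      hPP, hPP', add_zero, zero_add]
  calc nuclearNorm A + nuclearNorm B = trace ((A * CA + B * CB)ᵀ * (A + B)) := by
        rw [transpose_add, Matrix.add_mul, Matrix.mul_add, Matrix.mul_add, hAW, hBW, add_zero,
          zero_add, trace_add, htrA, htrB]
    _ ≤ nuclearNorm (A + B) := trace_transpose_mul_le_nuclearNorm _ hid

lemma nuclearNorm_le_sqrt_rank_mul_frobNorm (A : Matrix m n ℝ) :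
    nuclearNorm A ≤ √A.rank * frobNorm A := by
  classical
  set s := Finset.univ.filter fun j => sqSingularValue A j ≠ 0
  have hcard : (s.card : ℝ) = A.rank := by
    rw [← rank_conjTranspose_mul_self,
      (isHermitian_conjTranspose_mul_self A).rank_eq_card_non_zero_eigs, Fintype.card_subtype]
    rfl
  have htrace : ∑ j, sqSingularValue A j = frobNorm A ^ 2 := by
    rw [frobNorm_sq, ← conjTranspose_eq_transpose_of_trivial,
      (isHermitian_conjTranspose_mul_self A).trace_eq_sum_eigenvalues]
    simp [sqSingularValue]
  calc nuclearNorm A = ∑ j ∈ s, √1 * √(sqSingularValue A j) := by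
        rw [nuclearNorm_eq_sum_sqrt_sqSingularValue, Finset.sum_filter]
        refine Finset.sum_congr rfl fun j _ => ?_
        split_ifs with h
        · rw [Real.sqrt_one, one_mul]
        · rw [not_not.mp h, Real.sqrt_zero]
    _ ≤ √(∑ j ∈ s, 1) * √(∑ j ∈ s, sqSingularValue A j) :=
        Real.sum_sqrt_mul_sqrt_le s (fun _ => zero_le_one) (sqSingularValue_nonneg A)
    _ ≤ √A.rank * frobNorm A := by
        rw [Finset.sum_const, nsmul_one, hcard, ← Real.sqrt_sq (frobNorm_nonneg A), ← htrace]
        gcongr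
        · exact fun j _ _ => sqSingularValue_nonneg A j
        · exact Finset.subset_univ s

lemma nuclearNorm_sub_nuclearNorm_add_le_of_decomposable {Θ D₁ D₂ : Matrix m n ℝ}
    (hdec : nuclearNorm Θ + nuclearNorm D₁ ≤ nuclearNorm (Θ + D₁)) :
    nuclearNorm Θ - nuclearNorm (Θ + (D₁ + D₂)) ≤ nuclearNorm D₂ - nuclearNorm D₁ := by
  have := nuclearNorm_add_le (Θ + (D₁ + D₂)) (-D₂)
  rw [nuclearNorm_neg, show Θ + (D₁ + D₂) + -D₂ = Θ + D₁ by abel] at this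
  linarith

end NuclearNorm

lemma rank_mul_add_mul_le {R m n k₁ k₂ : Type*} [CommRing R] [StrongRankCondition R] [Fintype n]
    [Fintype k₁] [Fintype k₂] (A₁ : Matrix m k₁ R) (B₁ : Matrix k₁ n R) (A₂ : Matrix m k₂ R)
    (B₂ : Matrix k₂ n R) :
    (A₁ * B₁ + A₂ * B₂).rank ≤ Fintype.card k₁ + Fintype.card k₂ := by
  rw [← fromCols_mul_fromRows, ← Fintype.card_sum]
  exact (rank_mul_le_left _ _).trans (rank_le_card_width _)

lemma card_le_rank_mul_mul_transpose {K m n k : Type*} [Field K] [Fintype m] [Fintype n]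
    [Fintype k] [DecidableEq k] {U : Matrix m k K} {V : Matrix n k K} {S : Matrix k k K}
    (hU : Uᵀ * U = 1) (hV : Vᵀ * V = 1) (hS : S.IsDiag) (hS₀ : ∀ i, S i i ≠ 0) :
    Fintype.card k ≤ (U * S * Vᵀ).rank := by
  classical
  have hrank : S.rank = Fintype.card k := by
    rw [← hS.diagonal_diag, rank_diagonal]
    simp [hS₀]
  have hS_eq : Uᵀ * (U * S * Vᵀ) * V = S := by
    simp only [← Matrix.mul_assoc, hU, Matrix.one_mul]
    rw [Matrix.mul_assoc, hV, Matrix.mul_one]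
  calc Fintype.card k = (Uᵀ * (U * S * Vᵀ) * V).rank := by rw [hS_eq, hrank]
    _ ≤ (Uᵀ * (U * S * Vᵀ)).rank := rank_mul_le_left _ _
    _ ≤ (U * S * Vᵀ).rank := rank_mul_le_right _ _

section OrthogonalProjection

variable {m n k m₂ n₂ : Type*} [Fintype m] [Fintype n] [Fintype k] [Fintype m₂] [Fintype n₂]
  {U₁ : Matrix m k ℝ} {U₂ : Matrix m m₂ ℝ} {V₁ : Matrix n k ℝ} {V₂ : Matrix n n₂ ℝ}
  [DecidableEq n]

lemma nuclearNorm_add_nuclearNorm_proj_le (hU₁₂ : U₁ᵀ * U₂ = 0) (hV₁₂ : V₁ᵀ * V₂ = 0)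
    (S : Matrix k k ℝ) (Δ : Matrix m n ℝ) :
    nuclearNorm (U₁ * S * V₁ᵀ) + nuclearNorm (U₂ * U₂ᵀ * Δ * (V₂ * V₂ᵀ)) ≤
      nuclearNorm (U₁ * S * V₁ᵀ + U₂ * U₂ᵀ * Δ * (V₂ * V₂ᵀ)) := by
  apply nuclearNorm_add_nuclearNorm_le_of_orthogonal
  · simp only [transpose_mul, transpose_transpose, Matrix.mul_assoc]
    rw [← Matrix.mul_assoc U₁ᵀ U₂, hU₁₂]
    simp
  · simp only [transpose_mul, transpose_transpose, Matrix.mul_assoc]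
    rw [← Matrix.mul_assoc V₁ᵀ V₂, hV₁₂]
    simp

lemma nuclearNorm_sub_nuclearNorm_add_le_of_proj (hU₁₂ : U₁ᵀ * U₂ = 0) (hV₁₂ : V₁ᵀ * V₂ = 0)
    (S : Matrix k k ℝ) (Δ : Matrix m n ℝ) :
    nuclearNorm (U₁ * S * V₁ᵀ) - nuclearNorm (U₁ * S * V₁ᵀ + Δ) ≤
      nuclearNorm (Δ - U₂ * U₂ᵀ * Δ * (V₂ * V₂ᵀ)) - nuclearNorm (U₂ * U₂ᵀ * Δ * (V₂ * V₂ᵀ)) := by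
  have := nuclearNorm_sub_nuclearNorm_add_le_of_decomposable
    (D₂ := Δ - U₂ * U₂ᵀ * Δ * (V₂ * V₂ᵀ)) (nuclearNorm_add_nuclearNorm_proj_le hU₁₂ hV₁₂ S Δ)
  rwa [add_sub_cancel] at this

variable [DecidableEq m]

lemma sub_proj_eq (hUc : U₁ * U₁ᵀ + U₂ * U₂ᵀ = 1) (hVc : V₁ * V₁ᵀ + V₂ * V₂ᵀ = 1)
    (Δ : Matrix m n ℝ) :
    Δ - U₂ * U₂ᵀ * Δ * (V₂ * V₂ᵀ) = U₁ * (U₁ᵀ * Δ) + U₂ * U₂ᵀ * Δ * V₁ * V₁ᵀ := by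
  rw [eq_sub_of_add_eq' hUc, eq_sub_of_add_eq' hVc]
  simp only [Matrix.sub_mul, Matrix.mul_sub, Matrix.one_mul, Matrix.mul_one, Matrix.mul_assoc]
  abel

lemma rank_sub_proj_le (hUc : U₁ * U₁ᵀ + U₂ * U₂ᵀ = 1) (hVc : V₁ * V₁ᵀ + V₂ * V₂ᵀ = 1)
    (Δ : Matrix m n ℝ) : (Δ - U₂ * U₂ᵀ * Δ * (V₂ * V₂ᵀ)).rank ≤ 2 * Fintype.card k := by
  rw [sub_proj_eq hUc hVc, two_mul]
  exact rank_mul_add_mul_le _ _ _ _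

lemma frobNorm_sub_proj_le (hU₁₂ : U₁ᵀ * U₂ = 0) (hV₁₂ : V₁ᵀ * V₂ = 0)
    (hUc : U₁ * U₁ᵀ + U₂ * U₂ᵀ = 1) (hVc : V₁ * V₁ᵀ + V₂ * V₂ᵀ = 1) (Δ : Matrix m n ℝ) :
    frobNorm (Δ - U₂ * U₂ᵀ * Δ * (V₂ * V₂ᵀ)) ≤ frobNorm Δ := by
  have hU₂₁ : U₂ᵀ * U₁ = 0 := by simpa using congrArg transpose hU₁₂
  have horth : trace ((U₂ * U₂ᵀ * Δ * (V₂ * V₂ᵀ))ᵀ * (Δ - U₂ * U₂ᵀ * Δ * (V₂ * V₂ᵀ))) = 0 := by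
    rw [sub_proj_eq hUc hVc, Matrix.mul_add, trace_add, ← Matrix.mul_assoc _ _ V₁ᵀ,
      trace_mul_comm _ V₁ᵀ]
    simp only [transpose_mul, transpose_transpose, Matrix.mul_assoc]
    rw [← Matrix.mul_assoc U₂ᵀ U₁, hU₂₁, ← Matrix.mul_assoc V₁ᵀ V₂, hV₁₂]
    simp
  simpa using frobNorm_le_frobNorm_add_of_trace_eq_zero horth

lemma nuclearNorm_sub_proj_le (hU₁₂ : U₁ᵀ * U₂ = 0) (hV₁₂ : V₁ᵀ * V₂ = 0)
    (hUc : U₁ * U₁ᵀ + U₂ * U₂ᵀ = 1) (hVc : V₁ * V₁ᵀ + V₂ * V₂ᵀ = 1) (Δ : Matrix m n ℝ) :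
    nuclearNorm (Δ - U₂ * U₂ᵀ * Δ * (V₂ * V₂ᵀ)) ≤ √(2 * Fintype.card k) * frobNorm Δ := by
  refine (nuclearNorm_le_sqrt_rank_mul_frobNorm _).trans (mul_le_mul ?_
    (frobNorm_sub_proj_le hU₁₂ hV₁₂ hUc hVc Δ) (frobNorm_nonneg _) (Real.sqrt_nonneg _))
  exact Real.sqrt_le_sqrt (by exact_mod_cast rank_sub_proj_le hUc hVc Δ)

end OrthogonalProjection

lemma penalized_least_squares_basic_inequality {ι m n : Type*} [Fintype ι] [Fintype m]
    [Fintype n] (y : ι → ℝ) (X : ι → Matrix m n ℝ) (lam : ℝ) (R : Matrix m n ℝ → ℝ)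
    {Θ Θ' : Matrix m n ℝ}
    (h : (1 / 2) * ∑ i, (y i - trace ((X i)ᵀ * Θ')) ^ 2 + lam * R Θ' ≤
      (1 / 2) * ∑ i, (y i - trace ((X i)ᵀ * Θ)) ^ 2 + lam * R Θ) :
    (1 / 2) * ∑ i, trace ((X i)ᵀ * (Θ' - Θ)) ^ 2 ≤
      ∑ i, (y i - trace ((X i)ᵀ * Θ)) * trace ((X i)ᵀ * (Θ' - Θ)) + lam * (R Θ - R Θ') := by
  have hexp : ∀ i, (y i - trace ((X i)ᵀ * Θ')) ^ 2 = (y i - trace ((X i)ᵀ * Θ)) ^ 2 -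
      2 * ((y i - trace ((X i)ᵀ * Θ)) * trace ((X i)ᵀ * (Θ' - Θ))) +
        trace ((X i)ᵀ * (Θ' - Θ)) ^ 2 := fun i => by
    rw [Matrix.mul_sub, trace_sub]
    ring
  simp only [hexp, Finset.sum_add_distrib, Finset.sum_sub_distrib, ← Finset.mul_sum] at h
  linarith

lemma cone_and_bound_of_basic_inequality {T E g a b d r lam : ℝ} (hT : 0 ≤ T)
    (hbasic : (1 / 2) * T ≤ E + lam * g) (hg : g ≤ b - a) (hE : E ≤ r / 2 * d) (hd : d ≤ a + b)
    (hr : 0 < r) (hlam : 2 * r ≤ lam) (ha : 0 ≤ a) (hb : 0 ≤ b) :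
    a ≤ 3 * b ∧ T + r * d ≤ 3 * lam * b := by
  have hlam₀ : 0 < lam := by linarith
  have hg' := mul_le_mul_of_nonneg_left hg hlam₀.le
  have hd' := mul_le_mul_of_nonneg_left hd hr.le
  have hr' := mul_le_mul_of_nonneg_right hlam (add_nonneg ha hb)
  refine ⟨le_of_mul_le_mul_left ?_ hlam₀, ?_⟩
  · linarith [mul_nonneg hlam₀.le hb]
  · linarith [mul_nonneg hlam₀.le ha]

lemma le_div_of_mul_sq_le_mul {κ F c : ℝ} (hκ : 0 < κ) (hF : 0 ≤ F) (hc : 0 ≤ c)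
    (h : κ * F ^ 2 ≤ c * F) : F ≤ c / κ := by
  rcases hF.eq_or_lt with rfl | hF
  · exact div_nonneg hc hκ.le
  · rw [le_div_iff₀ hκ]
    exact le_of_mul_le_mul_right (by linarith) hF

theorem nuclear_norm_regularized_error_bound_general
    {m n k m₂ n₂ ι : Type*} [Fintype m] [Fintype n] [Fintype k] [Fintype m₂] [Fintype n₂]
    [Fintype ι] [DecidableEq m] [DecidableEq n] [DecidableEq k]
    (S : Set (Matrix m n ℝ))
    (Pi0 : Matrix m n ℝ) (hPiS : Pi0 ∈ S)
    -- SVD of Π defining the projections P and M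
    (U₁ : Matrix m k ℝ) (U₂ : Matrix m m₂ ℝ) (V₁ : Matrix n k ℝ) (V₂ : Matrix n n₂ ℝ)
    (Sig : Matrix k k ℝ)
    (hU1 : U₁ᵀ * U₁ = 1) (hU12 : U₁ᵀ * U₂ = 0)
    (hUc : U₁ * U₁ᵀ + U₂ * U₂ᵀ = 1)
    (hV1 : V₁ᵀ * V₁ = 1) (hV12 : V₁ᵀ * V₂ = 0)
    (hVc : V₁ * V₁ᵀ + V₂ * V₂ᵀ = 1)
    (hdiag : ∀ i j, i ≠ j → Sig i j = 0) (hnz : ∀ i, Sig i i ≠ 0)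
    (hSVD : Pi0 = U₁ * Sig * V₁ᵀ)
    (P M : Matrix m n ℝ → Matrix m n ℝ)
    (hP : ∀ Δ, P Δ = U₂ * U₂ᵀ * Δ * (V₂ * V₂ᵀ))
    (hMdef : ∀ Δ, M Δ = Δ - P Δ)
    (K : ℕ) (hK : Pi0.rank ≤ K + 1)
    -- data, constants and hypotheses (a), (b), (c)
    (y : ι → ℝ) (X : ι → Matrix m n ℝ)
    (κ r lam : ℝ) (hκ : 0 < κ) (hr : 0 < r) (hlam : 2 * r ≤ lam)
    (Q L : Matrix m n ℝ → ℝ)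
    (hQL : ∀ Δ, (∃ Γ₁ ∈ S, ∃ Γ₂ ∈ S, Δ = Γ₁ - Γ₂) →
      ∑ i, (Matrix.trace ((X i)ᵀ * Δ)) ^ 2 = Q Δ + L Δ)
    (hQ : ∀ Δ, (∃ Γ₁ ∈ S, ∃ Γ₂ ∈ S, Δ = Γ₁ - Γ₂) →
      nuclearNorm (P Δ) ≤ 3 * nuclearNorm (M Δ) → κ * frobNorm Δ ^ 2 ≤ Q Δ)
    (hL : ∀ Δ, (∃ Γ₁ ∈ S, ∃ Γ₂ ∈ S, Δ = Γ₁ - Γ₂) → |L Δ| ≤ r * nuclearNorm Δ)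
    (hnoise : ∀ Δ, (∃ Γ₁ ∈ S, ∃ Γ₂ ∈ S, Δ = Γ₁ - Γ₂) →
      |∑ i, (y i - Matrix.trace ((X i)ᵀ * Pi0)) * Matrix.trace ((X i)ᵀ * Δ)| ≤
        r / 2 * nuclearNorm Δ)
    -- the estimator
    (PiHat : Matrix m n ℝ) (hPiHatS : PiHat ∈ S)
    (hmin : ∀ Γ ∈ S,
      (1 / 2) * ∑ i, (y i - Matrix.trace ((X i)ᵀ * PiHat)) ^ 2 + lam * nuclearNorm PiHat ≤
        (1 / 2) * ∑ i, (y i - Matrix.trace ((X i)ᵀ * Γ)) ^ 2 + lam * nuclearNorm Γ) :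
    nuclearNorm (P (PiHat - Pi0)) ≤ 3 * nuclearNorm (M (PiHat - Pi0)) ∧
      frobNorm (PiHat - Pi0) ≤ 3 * Real.sqrt (2 * (K + 1)) * lam / κ := by
  set Δ := PiHat - Pi0
  have hmem : ∃ Γ₁ ∈ S, ∃ Γ₂ ∈ S, Δ = Γ₁ - Γ₂ := ⟨PiHat, hPiHatS, Pi0, hPiS, rfl⟩
  have hPiHat : PiHat = Pi0 + Δ := (add_sub_cancel Pi0 PiHat).symm
  have hgap : nuclearNorm Pi0 - nuclearNorm PiHat ≤ nuclearNorm (M Δ) - nuclearNorm (P Δ) := by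
    rw [hMdef, hP, hPiHat, hSVD]
    exact nuclearNorm_sub_nuclearNorm_add_le_of_proj hU12 hV12 Sig Δ
  have hsplit : nuclearNorm Δ ≤ nuclearNorm (P Δ) + nuclearNorm (M Δ) := by
    simpa [hMdef] using nuclearNorm_add_le (P Δ) (M Δ)
  obtain ⟨hcone, hbound⟩ := cone_and_bound_of_basic_inequality (by positivity)
    (penalized_least_squares_basic_inequality y X lam nuclearNorm (hmin Pi0 hPiS)) hgap
    ((le_abs_self _).trans (hnoise Δ hmem)) hsplit hr hlam (nuclearNorm_nonneg _)
    (nuclearNorm_nonneg _)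
  have hM : nuclearNorm (M Δ) ≤ √(2 * (K + 1)) * frobNorm Δ := by
    have hk := card_le_rank_mul_mul_transpose hU1 hV1 hdiag hnz
    rw [← hSVD] at hk
    rw [hMdef, hP]
    refine (nuclearNorm_sub_proj_le hU12 hV12 hUc hVc Δ).trans ?_
    refine mul_le_mul_of_nonneg_right (Real.sqrt_le_sqrt ?_) (frobNorm_nonneg _)
    exact_mod_cast Nat.mul_le_mul_left 2 (hk.trans hK)
  have hlam₀ : 0 ≤ lam := by linarith
  refine ⟨hcone, le_div_of_mul_sq_le_mul hκ (frobNorm_nonneg _) (by positivity) ?_⟩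
  calc κ * frobNorm Δ ^ 2 ≤ Q Δ := hQ Δ hmem hcone
    _ ≤ ∑ i, trace ((X i)ᵀ * Δ) ^ 2 + r * nuclearNorm Δ := by
        linarith [hQL Δ hmem, neg_le_of_abs_le (hL Δ hmem)]
    _ ≤ 3 * lam * nuclearNorm (M Δ) := hbound
    _ ≤ 3 * lam * (√(2 * (K + 1)) * frobNorm Δ) := by gcongr
    _ = 3 * √(2 * (K + 1)) * lam * frobNorm Δ := by ring

/-- Deterministic error bound for the constrained nuclear-norm regularized estimator
(Theorem 1(i)): under restricted strong convexity (a), the noise bound (b) and λ ≥ 2r (c),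
the error Δ̂ = Π̂ − Π lies in the cone ‖P(Δ̂)‖₊ ≤ 3‖M(Δ̂)‖₊ and
‖Π̂ − Π‖_F ≤ 3√(2(K+1)) λ / κ. -/
theorem nuclear_norm_regularized_error_bound
    {m n k m₂ n₂ ι : Type*} [Fintype m] [Fintype n] [Fintype k] [Fintype m₂] [Fintype n₂]
    [Fintype ι] [DecidableEq m] [DecidableEq n] [DecidableEq k] [DecidableEq m₂] [DecidableEq n₂]
    (S : Set (Matrix m n ℝ)) (hconv : Convex ℝ S)
    (Pi0 : Matrix m n ℝ) (hPiS : Pi0 ∈ S)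
    -- SVD of Π defining the projections P and M
    (U₁ : Matrix m k ℝ) (U₂ : Matrix m m₂ ℝ) (V₁ : Matrix n k ℝ) (V₂ : Matrix n n₂ ℝ)
    (Sig : Matrix k k ℝ)
    (hU1 : U₁ᵀ * U₁ = 1) (hU2 : U₂ᵀ * U₂ = 1) (hU12 : U₁ᵀ * U₂ = 0)
    (hUc : U₁ * U₁ᵀ + U₂ * U₂ᵀ = 1)
    (hV1 : V₁ᵀ * V₁ = 1) (hV2 : V₂ᵀ * V₂ = 1) (hV12 : V₁ᵀ * V₂ = 0)
    (hVc : V₁ * V₁ᵀ + V₂ * V₂ᵀ = 1)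
    (hdiag : ∀ i j, i ≠ j → Sig i j = 0) (hnz : ∀ i, Sig i i ≠ 0)
    (hSVD : Pi0 = U₁ * Sig * V₁ᵀ)
    (P M : Matrix m n ℝ → Matrix m n ℝ)
    (hP : ∀ Δ, P Δ = U₂ * U₂ᵀ * Δ * (V₂ * V₂ᵀ))
    (hMdef : ∀ Δ, M Δ = Δ - P Δ)
    (K : ℕ) (hK : Pi0.rank ≤ K + 1)
    -- data, constants and hypotheses (a), (b), (c)
    (y : ι → ℝ) (X : ι → Matrix m n ℝ)
    (κ r lam : ℝ) (hκ : 0 < κ) (hr : 0 < r) (hlam : 2 * r ≤ lam)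
    (Q L : Matrix m n ℝ → ℝ)
    (hQL : ∀ Δ, (∃ Γ₁ ∈ S, ∃ Γ₂ ∈ S, Δ = Γ₁ - Γ₂) →
      ∑ i, (Matrix.trace ((X i)ᵀ * Δ)) ^ 2 = Q Δ + L Δ)
    (hQ : ∀ Δ, (∃ Γ₁ ∈ S, ∃ Γ₂ ∈ S, Δ = Γ₁ - Γ₂) →
      nuclearNorm (P Δ) ≤ 3 * nuclearNorm (M Δ) → κ * frobNorm Δ ^ 2 ≤ Q Δ)
    (hL : ∀ Δ, (∃ Γ₁ ∈ S, ∃ Γ₂ ∈ S, Δ = Γ₁ - Γ₂) → |L Δ| ≤ r * nuclearNorm Δ)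
    (hnoise : ∀ Δ, (∃ Γ₁ ∈ S, ∃ Γ₂ ∈ S, Δ = Γ₁ - Γ₂) →
      |∑ i, (y i - Matrix.trace ((X i)ᵀ * Pi0)) * Matrix.trace ((X i)ᵀ * Δ)| ≤
        r / 2 * nuclearNorm Δ)
    -- the estimator
    (PiHat : Matrix m n ℝ) (hPiHatS : PiHat ∈ S)
    (hmin : ∀ Γ ∈ S,
      (1 / 2) * ∑ i, (y i - Matrix.trace ((X i)ᵀ * PiHat)) ^ 2 + lam * nuclearNorm PiHat ≤
        (1 / 2) * ∑ i, (y i - Matrix.trace ((X i)ᵀ * Γ)) ^ 2 + lam * nuclearNorm Γ) :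
    nuclearNorm (P (PiHat - Pi0)) ≤ 3 * nuclearNorm (M (PiHat - Pi0)) ∧
      frobNorm (PiHat - Pi0) ≤ 3 * Real.sqrt (2 * (K + 1)) * lam / κ :=
  nuclear_norm_regularized_error_bound_general S Pi0 hPiS U₁ U₂ V₁ V₂ Sig hU1 hU12 hUc hV1 hV12 hVc
    hdiag hnz hSVD P M hP hMdef K hK y X κ r lam hκ hr hlam Q L hQL hQ hL hnoise PiHat hPiHatS hmin
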